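/- arXiv:2312.07922 — 2 statements merged into one kernel-verified Lean document; each statement's English description precedes it below -/
import Mathlib

section
/- (Theorem 1.) Let S_F, S_G be types, A an additive commutative group, F : S_F → A → S_F × A and G : S_G → A → S_G × A stateful modules, sF0 ∈ S_F, sG0 ∈ S_G initial states, and X1, X2 : ℕ → A input sequences. Define the forward trajectory recursively over time steps t by: sF(0) = sF0, sG(0) = sG0, (sF(t+1), f(t)) = F(sF(t), X2(t)), Y1(t) = X1(t) + f(t), (sG(t+1), g(t)) = G(sG(t), Y1(t)), Y2(t) = X2(t) + g(t). After resetting states to the initial values, define the reverse trajectory from the output sequences (Y1, Y2) by: rG(0) = sG0, rF(0) = sF0, (rG(t+1), g'(t)) = G(rG(t), Y1(t)), X2'(t) = Y2(t) − g'(t), (rF(t+1), f'(t)) = F(rF(t), X2'(t)), X1'(t) = Y1(t) − f'(t). Then for every time step t: X1'(t) = X1(t), X2'(t) = X2(t), f'(t) = f(t), g'(t) = g(t), rF(t) = sF(t), and rG(t) = sG(t). That is, the inputs, outputs, and all intermediate variables (including the internal membrane-potential states of F and G) of the forward process are identical to those recomputed in the reverse process at every time step. -/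
/-- Theorem 1: for a spiking reversible block unrolled over time, the inputs,
outputs, and all intermediate variables (including the internal
membrane-potential states of `F` and `G`) of the forward process are identical
to those recomputed in the reverse process at every time step, provided the
internal states are reset to their initial values before the reverse process. -/
theorem spiking_reversible_block_reverse_recomputes_forward
    {SF SG A : Type*} [AddCommGroup A]
    (F : SF → A → SF × A) (G : SG → A → SG × A)
    (sF0 : SF) (sG0 : SG) (X1 X2 : ℕ → A)
    -- forward trajectory
    (sF : ℕ → SF) (sG : ℕ → SG) (f g Y1 Y2 : ℕ → A)
    (hsF0 : sF 0 = sF0) (hsG0 : sG 0 = sG0)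
    (hF : ∀ t, F (sF t) (X2 t) = (sF (t + 1), f t))
    (hY1 : ∀ t, Y1 t = X1 t + f t)
    (hG : ∀ t, G (sG t) (Y1 t) = (sG (t + 1), g t))
    (hY2 : ∀ t, Y2 t = X2 t + g t)
    -- reverse trajectory, after resetting states to the initial values
    (rF : ℕ → SF) (rG : ℕ → SG) (f' g' X1' X2' : ℕ → A)
    (hrF0 : rF 0 = sF0) (hrG0 : rG 0 = sG0)
    (hG' : ∀ t, G (rG t) (Y1 t) = (rG (t + 1), g' t))
    (hX2' : ∀ t, X2' t = Y2 t - g' t)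
    (hF' : ∀ t, F (rF t) (X2' t) = (rF (t + 1), f' t))
    (hX1' : ∀ t, X1' t = Y1 t - f' t) :
    ∀ t, X1' t = X1 t ∧ X2' t = X2 t ∧ f' t = f t ∧ g' t = g t ∧
      rF t = sF t ∧ rG t = sG t := by
  have key : ∀ t, rF t = sF t ∧ rG t = sG t := by
    intro t
    induction t with
    | zero => exact ⟨hrF0.trans hsF0.symm, hrG0.trans hsG0.symm⟩
    | succ t ih =>
      obtain ⟨hf, hg⟩ := ih
      have hg' := hG' t
      rw [hg] at hg'
      have hgeq := (hG t).symm.trans hg'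
      have hg1 : g' t = g t := by
        have := congrArg Prod.snd hgeq; simpa using this.symm
      have hx2 : X2' t = X2 t := by
        rw [hX2' t, hg1, hY2 t]; abel
      have hf' := hF' t
      rw [hf, hx2] at hf'
      have hfeq := (hF t).symm.trans hf'
      exact ⟨(congrArg Prod.fst hfeq).symm, (congrArg Prod.fst hgeq).symm⟩
  intro t
  obtain ⟨hf, hg⟩ := key t
  obtain ⟨hf1, hg1⟩ := key (t+1)
  have hg' := hG' t; rw [hg] at hg'
  have hgeq := (hG t).symm.trans hg'
  have hgE : g' t = g t := (congrArg Prod.snd hgeq).symm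
  have hx2 : X2' t = X2 t := by rw [hX2' t, hgE, hY2 t]; abel
  have hf' := hF' t; rw [hf, hx2] at hf'
  have hfeq := (hF t).symm.trans hf'
  have hfE : f' t = f t := (congrArg Prod.snd hfeq).symm
  have hx1 : X1' t = X1 t := by rw [hX1' t, hfE, hY1 t]; abel
  exact ⟨hx1, hx2, hfE, hgE, hf, hg⟩
end

section
/- Let S_F, S_G be types, A an additive commutative group, F : S_F → A → S_F × A and G : S_G → A → S_G × A stateful modules, and sF0 ∈ S_F, sG0 ∈ S_G fixed initial states. Define the T-unrolled forward map Φ on input sequences X : ℕ → A × A by the recursion sF(0) = sF0, sG(0) = sG0, (sF(t+1), f(t)) = F(sF(t), (X(t)).2), Y1(t) = (X(t)).1 + f(t), (sG(t+1), g(t)) = G(sG(t), Y1(t)), Y2(t) = (X(t)).2 + g(t), with Φ(X)(t) = (Y1(t), Y2(t)). Then Φ is injective: two input sequences producing the same output sequence at every time step are equal at every time step. -/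
/-- One time step of a spiking reversible block built from stateful modules
`F` and `G`: from the current internal states and the pair of inputs, produce
the next internal states and the pair of outputs. -/
def revBlockStep {SF SG A : Type*} [AddCommGroup A]
    (F : SF → A → SF × A) (G : SG → A → SG × A)
    (s : SF × SG) (x : A × A) : (SF × SG) × (A × A) :=
  let fr := F s.1 x.2
  let Y1 := x.1 + fr.2
  let gr := G s.2 Y1
  ((fr.1, gr.1), (Y1, x.2 + gr.2))

/-- The trajectory of internal states of the spiking reversible block unrolled
over time, starting from the initial states `(sF0, sG0)`, driven by the input
sequence `X`. -/
def revBlockState {SF SG A : Type*} [AddCommGroup A]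
    (F : SF → A → SF × A) (G : SG → A → SG × A)
    (sF0 : SF) (sG0 : SG) (X : ℕ → A × A) : ℕ → SF × SG
  | 0 => (sF0, sG0)
  | t + 1 => (revBlockStep F G (revBlockState F G sF0 sG0 X t) (X t)).1

/-- The unrolled forward map `Φ` of the spiking reversible block: the output
pair `(Y1 t, Y2 t)` at each time step `t`. -/
def revBlockForward {SF SG A : Type*} [AddCommGroup A]
    (F : SF → A → SF × A) (G : SG → A → SG × A)
    (sF0 : SF) (sG0 : SG) (X : ℕ → A × A) (t : ℕ) : A × A :=
  (revBlockStep F G (revBlockState F G sF0 sG0 X t) (X t)).2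

/-- The unrolled forward map of a spiking reversible block is injective: two
input sequences producing the same output sequence at every time step are
equal at every time step. -/
theorem revBlockForward_injective
    {SF SG A : Type*} [AddCommGroup A]
    (F : SF → A → SF × A) (G : SG → A → SG × A)
    (sF0 : SF) (sG0 : SG) (X X' : ℕ → A × A)
    (h : ∀ t, revBlockForward F G sF0 sG0 X t = revBlockForward F G sF0 sG0 X' t) :
    ∀ t, X t = X' t := by
  have key : ∀ t, revBlockState F G sF0 sG0 X t = revBlockState F G sF0 sG0 X' t ∧ X t = X' t := by
    intro t
    induction t with
    | zero =>
      refine ⟨rfl, ?_⟩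
      have h0 := h 0
      simp only [revBlockForward, revBlockStep, revBlockState, Prod.mk.injEq] at h0
      obtain ⟨h1, h2⟩ := h0
      have hx2 : (X 0).2 = (X' 0).2 := by
        have := h2
        rw [h1] at this
        exact add_right_cancel this
      have hx1 : (X 0).1 = (X' 0).1 := by
        rw [hx2] at h1
        exact add_right_cancel h1
      exact Prod.ext hx1 hx2
    | succ t ih =>
      obtain ⟨hs, hx⟩ := ih
      have hs' : revBlockState F G sF0 sG0 X (t+1) = revBlockState F G sF0 sG0 X' (t+1) := by
        simp only [revBlockState, hs, hx]
      refine ⟨hs', ?_⟩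
      have h0 := h (t+1)
      simp only [revBlockForward, hs', revBlockStep, Prod.mk.injEq] at h0
      obtain ⟨h1, h2⟩ := h0
      have hx2 : (X (t+1)).2 = (X' (t+1)).2 := by
        rw [h1] at h2
        exact add_right_cancel h2
      have hx1 : (X (t+1)).1 = (X' (t+1)).1 := by
        rw [hx2] at h1
        exact add_right_cancel h1
      exact Prod.ext hx1 hx2
  exact fun t => (key t).2
end
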